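/- arXiv:1603.08548 — 9 statements merged into one kernel-verified Lean document; each statement's English description precedes it below -/
import Mathlib

section
/- Let f : ℝ → ℝ be a continuous function such that liminf_{x → ∞} (f(x) - x) > 0. Let a := sup {x : f(x) = x} (with a := -∞ if f has no fixed points). Then for every x > a, the sequence of iterates f^n(x) tends to infinity as n → ∞. -/
theorem stmt_0 (f : ℝ → ℝ) (hf : Continuous f)
    (hlim : 0 < Filter.liminf (fun x => f x - x) Filter.atTop)
    (x : ℝ) (hx : (∃ y, f y = y) → sSup {y | f y = y} < x) :
    Filter.Tendsto (fun n => f^[n] x) Filter.atTop Filter.atTop := by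
  -- Step 1: get ε > 0 with eventually f y - y ≥ ε
  rw [Filter.liminf_eq] at hlim
  set S : Set ℝ := {a | ∀ᶠ y in Filter.atTop, a ≤ f y - y} with hS
  have hne : S.Nonempty := by
    by_contra h
    rw [Set.not_nonempty_iff_eq_empty] at h
    rw [h, Real.sSup_empty] at hlim
    exact lt_irrefl 0 hlim
  have hbdd : BddAbove S := by
    by_contra h
    rw [Real.sSup_of_not_bddAbove h] at hlim
    exact lt_irrefl 0 hlim
  obtain ⟨ε, hεS, hε⟩ := exists_lt_of_lt_csSup hne hlim
  obtain ⟨M, hM⟩ := Filter.eventually_atTop.mp hεS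
  -- Step 2: every fixed point is < x
  have hfp : ∀ w, f w = w → w < x := by
    intro w hw
    have hlt := hx ⟨w, hw⟩
    have hwM : ∀ z ∈ {y | f y = y}, z ≤ M := by
      intro z hz
      by_contra hzM
      push_neg at hzM
      have := hM z hzM.le
      rw [hz] at this
      linarith
    have : w ≤ sSup {y | f y = y} :=
      le_csSup ⟨M, hwM⟩ hw
    linarith
  -- Step 3: f y > y for all y ≥ x
  have hgt : ∀ y, x ≤ y → y < f y := by
    intro y hy
    by_contra h
    push_neg at h
    rcases eq_or_lt_of_le h with heq | hlt'
    · exact absurd (hfp y heq) (not_lt.mpr hy)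
    · -- f y < y; use IVT on [y, max y M] to find a fixed point ≥ y
      set z := max y M with hz
      have hz1 : y ≤ z := le_max_left _ _
      have hz2 : ε ≤ f z - z := hM z (le_max_right _ _)
      have hcont : ContinuousOn (fun t => f t - t) (Set.Icc y z) :=
        (hf.sub continuous_id).continuousOn
      have h0 : (0:ℝ) ∈ Set.Icc (f y - y) (f z - z) :=
        ⟨by linarith, by linarith⟩
      obtain ⟨w, hw1, hw2⟩ := intermediate_value_Icc hz1 hcont h0
      have hwfix : f w = w := by linarith [hw2.le, hw2.ge, sub_eq_zero.mp hw2]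
      have := hfp w hwfix
      have : x ≤ w := le_trans hy hw1.1
      linarith [hfp w hwfix]
  -- Step 4: iterates are ≥ x and strictly increasing
  have hge : ∀ n, x ≤ f^[n] x := by
    intro n
    induction n with
    | zero => simp
    | succ n ih =>
      rw [Function.iterate_succ_apply']
      exact le_of_lt (lt_of_le_of_lt ih (hgt _ ih))
  have hmono : Monotone (fun n => f^[n] x) := by
    apply monotone_nat_of_le_succ
    intro n
    rw [Function.iterate_succ_apply']
    exact (hgt _ (hge n)).le
  -- Step 5: conclude
  rcases tendsto_of_monotone hmono with h | ⟨l, hl⟩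
  · exact h
  · exfalso
    have hxl : x ≤ l := ge_of_tendsto' hl hge
    have h1 : Filter.Tendsto (fun n => f^[n+1] x) Filter.atTop (nhds l) :=
      hl.comp (Filter.tendsto_add_atTop_nat 1)
    have h2 : Filter.Tendsto (fun n => f (f^[n] x)) Filter.atTop (nhds (f l)) :=
      (hf.tendsto l).comp hl
    have h3 : (fun n => f^[n+1] x) = fun n => f (f^[n] x) := by
      funext n; rw [Function.iterate_succ_apply']
    rw [h3] at h1
    have : f l = l := tendsto_nhds_unique h2 h1
    linarith [hgt l hxl]
end

section
/- Let p ≥ 2 be an even integer and c ≥ 0 a real number. The sequence of iterates of Q_{p,c}(x) = x^p + c starting at 0 is bounded if and only if Q_{p,c} has a fixed point a ≥ 0. -/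
/-! The orbit of `0` under `x ↦ x ^ p + c` is nonnegative and nondecreasing, because the map is
monotone on `[0, ∞)` and `0 ≤ c`. A nonnegative fixed point `a` bounds it by induction; conversely
a bounded orbit converges, and by continuity its limit is a fixed point. -/

open Set Function

section OrbitOfMonotoneMap

variable {α : Type*} {f : α → α} {x : α}

lemma mapsTo_Ici_of_monotoneOn [Preorder α] (hf : MonotoneOn f (Ici x)) (hx : x ≤ f x) :
    MapsTo f (Ici x) (Ici x) :=
  fun _ hy => hx.trans (hf self_mem_Ici hy hy)

lemma le_iterate_of_monotoneOn [Preorder α] (hf : MonotoneOn f (Ici x)) (hx : x ≤ f x) (n : ℕ) :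
    x ≤ f^[n] x :=
  (mapsTo_Ici_of_monotoneOn hf hx).iterate n self_mem_Ici

lemma monotone_iterate_of_monotoneOn [Preorder α] (hf : MonotoneOn f (Ici x)) (hx : x ≤ f x) :
    Monotone fun n => f^[n] x := by
  refine monotone_nat_of_le_succ fun n => ?_
  induction n with
  | zero => exact hx
  | succ n ih =>
    rw [iterate_succ_apply' f n, iterate_succ_apply' f (n + 1)]
    exact hf (le_iterate_of_monotoneOn hf hx _) (le_iterate_of_monotoneOn hf hx _) ih

lemma iterate_le_of_isFixedPt [Preorder α] (hf : MonotoneOn f (Ici x)) (hx : x ≤ f x) {a : α}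
    (hxa : x ≤ a) (ha : IsFixedPt f a) (n : ℕ) : f^[n] x ≤ a := by
  induction n with
  | zero => exact hxa
  | succ n ih =>
    rw [iterate_succ_apply', ← ha.eq]
    exact hf (le_iterate_of_monotoneOn hf hx n) hxa ih

theorem bddAbove_range_iterate_iff [ConditionallyCompleteLinearOrder α] [TopologicalSpace α]
    [OrderTopology α] (hfc : Continuous f) (hf : MonotoneOn f (Ici x)) (hx : x ≤ f x) :
    BddAbove (range fun n => f^[n] x) ↔ ∃ a, x ≤ a ∧ IsFixedPt f a := by
  constructor
  · intro hbdd
    have hlim := tendsto_atTop_ciSup (monotone_iterate_of_monotoneOn hf hx) hbdd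
    exact ⟨_, le_ciSup_of_le hbdd 0 le_rfl, isFixedPt_of_tendsto_iterate hlim hfc.continuousAt⟩
  · rintro ⟨a, hxa, ha⟩
    exact ⟨a, forall_mem_range.2 (iterate_le_of_isFixedPt hf hx hxa ha)⟩

end OrbitOfMonotoneMap

lemma bddAbove_range_iff_exists_abs_le_of_nonneg {u : ℕ → ℝ} (hu : ∀ n, 0 ≤ u n) :
    BddAbove (range u) ↔ ∃ M : ℝ, ∀ n : ℕ, 1 ≤ n → |u n| ≤ M := by
  constructor
  · rintro ⟨M, hM⟩
    exact ⟨M, fun n _ => (abs_of_nonneg (hu n)).trans_le (hM (mem_range_self n))⟩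
  · rintro ⟨M, hM⟩
    refine ⟨max M (u 0), forall_mem_range.2 fun n => ?_⟩
    rcases n with _ | n
    · exact le_max_right _ _
    · exact le_max_of_le_left ((le_abs_self _).trans (hM _ n.succ_pos))

theorem stmt_2_general (p : ℕ) (c : ℝ) (hc : 0 ≤ c) :
    (∃ M : ℝ, ∀ n : ℕ, 1 ≤ n → |(fun x : ℝ => x ^ p + c)^[n] 0| ≤ M) ↔
      ∃ a : ℝ, 0 ≤ a ∧ a ^ p + c = a := by
  set f : ℝ → ℝ := fun x => x ^ p + c
  have hfc : Continuous f := by fun_prop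
  have hf : MonotoneOn f (Ici 0) := fun a ha _ _ hab =>
    add_le_add_left (pow_le_pow_left₀ ha hab p) c
  have h0 : (0 : ℝ) ≤ f 0 := add_nonneg (pow_nonneg le_rfl p) hc
  rw [← bddAbove_range_iff_exists_abs_le_of_nonneg (le_iterate_of_monotoneOn hf h0)]
  exact bddAbove_range_iterate_iff hfc hf h0

theorem stmt_2 (p : ℕ) (hp : 2 ≤ p) (hpe : Even p) (c : ℝ) (hc : 0 ≤ c) :
    (∃ M : ℝ, ∀ n : ℕ, 1 ≤ n → |(fun x : ℝ => x ^ p + c)^[n] 0| ≤ M) ↔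
      ∃ a : ℝ, 0 ≤ a ∧ a ^ p + c = a :=
  stmt_2_general p c hc
end

section
/- Let p ≥ 2 be an even integer and c ≥ 0 a real number. The sequence {Q_{p,c}^n(0)}_{n≥1} of iterates of Q_{p,c}(x) = x^p + c starting at 0 is bounded if and only if c ≤ (p-1)/p^{p/(p-1)}. -/
/-!
The orbit of `0` under `x ↦ x ^ p + c` stays in `[0, ∞)`. With
`β = p ^ (-1 / (p - 1))`, the point where `x ^ p` has slope `1`, the critical value is
`c* = β - β ^ p`, and the tangent line at `β` gives `x - c* ≤ x ^ p` for `x ≥ 0`.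
If `c ≤ c*`, then `β ^ p + c ≤ β` and `[0, β]` is invariant. If `c > c*`, every step
increases the orbit by at least `c - c*`, so it is unbounded.
-/

open Real Function Set

lemma pow_add_mul_sub_le_pow {β x : ℝ} (hβ : 0 < β) (hx : 0 ≤ x) (n : ℕ) :
    β ^ n + n * β ^ (n - 1) * (x - β) ≤ x ^ n := by
  rcases Nat.eq_zero_or_pos n with rfl | hn
  · simp
  have bernoulli := one_add_mul_le_pow (a := x / β - 1) (by linarith [div_nonneg hx hβ.le]) n
  calc β ^ n + n * β ^ (n - 1) * (x - β) = β ^ n * (1 + n * (x / β - 1)) := by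
        rw [← mul_pow_sub_one hn.ne']; field_simp
    _ ≤ β ^ n * (1 + (x / β - 1)) ^ n := by gcongr
    _ = x ^ n := by rw [← mul_pow]; field_simp; simp

lemma exists_tangent_point {p : ℕ} (hp : 2 ≤ p) :
    ∃ β > 0, (p : ℝ) * β ^ (p - 1) = 1 ∧
      β - β ^ p = ((p : ℝ) - 1) / (p : ℝ) ^ ((p : ℝ) / ((p : ℝ) - 1)) := by
  have hP0 : (0 : ℝ) < p := by positivity
  have hP1 : (p : ℝ) - 1 ≠ 0 := by
    rw [sub_ne_zero]; exact_mod_cast (by omega : p ≠ 1)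
  set β : ℝ := (p : ℝ) ^ (-1 / ((p : ℝ) - 1))
  have hβ : 0 < β := rpow_pos_of_pos hP0 _
  have hslope : (p : ℝ) * β ^ (p - 1) = 1 := by
    rw [← rpow_natCast, ← rpow_mul hP0.le, Nat.cast_sub (by omega), Nat.cast_one,
      div_mul_cancel₀ _ hP1, rpow_neg_one, mul_inv_cancel₀ hP0.ne']
  refine ⟨β, hβ, hslope, ?_⟩
  have hpow : (p : ℝ) ^ ((p : ℝ) / ((p : ℝ) - 1)) = p / β := by
    rw [eq_div_iff hβ.ne', ← rpow_add hP0, ← add_div, ← sub_eq_add_neg, div_self hP1, rpow_one]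
  have hβp : β ^ p = β / p := by
    rw [eq_div_iff hP0.ne', ← mul_pow_sub_one (by omega)]
    linear_combination β * hslope
  rw [hpow, hβp]
  field_simp

lemma mul_le_iterate_zero_of_forall_add_le {f : ℝ → ℝ} {δ : ℝ} (hδ : 0 ≤ δ)
    (hf : ∀ x, 0 ≤ x → x + δ ≤ f x) (n : ℕ) : n * δ ≤ f^[n] 0 := by
  induction n with
  | zero => simp
  | succ n ih =>
    rw [iterate_succ_apply', Nat.cast_succ, add_one_mul]
    exact (add_le_add_left ih δ).trans (hf _ ((by positivity : 0 ≤ n * δ).trans ih))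

lemma not_bounded_iterate_zero_of_forall_add_le {f : ℝ → ℝ} {δ : ℝ} (hδ : 0 < δ)
    (hf : ∀ x, 0 ≤ x → x + δ ≤ f x) : ¬ ∃ M : ℝ, ∀ n : ℕ, 1 ≤ n → |f^[n] 0| ≤ M := by
  rintro ⟨M, hM⟩
  obtain ⟨n, hn⟩ := exists_nat_gt (M / δ)
  have hlower := mul_le_iterate_zero_of_forall_add_le hδ.le hf (n + 1)
  have hupper := (le_abs_self _).trans (hM (n + 1) (by omega))
  rw [div_lt_iff₀ hδ] at hn
  push_cast at hlower
  nlinarith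

lemma mapsTo_pow_add_Icc {p : ℕ} {c β : ℝ} (hc : 0 ≤ c) (hfix : β ^ p + c ≤ β) :
    MapsTo (fun x : ℝ => x ^ p + c) (Icc 0 β) (Icc 0 β) := fun x ⟨hx0, hxβ⟩ =>
  ⟨by positivity, (add_le_add_left (pow_le_pow_left₀ hx0 hxβ p) c).trans hfix⟩

theorem stmt_5_general (p : ℕ) (hp : 2 ≤ p) (c : ℝ) (hc : 0 ≤ c) :
    (∃ M : ℝ, ∀ n : ℕ, 1 ≤ n → |(fun x : ℝ => x ^ p + c)^[n] 0| ≤ M) ↔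
      c ≤ ((p : ℝ) - 1) / (p : ℝ) ^ ((p : ℝ) / ((p : ℝ) - 1)) := by
  obtain ⟨β, hβ, hslope, hcrit⟩ := exists_tangent_point hp
  rw [← hcrit]
  constructor
  · intro hbdd
    by_contra! hlt
    refine not_bounded_iterate_zero_of_forall_add_le (sub_pos.2 hlt) (fun x hx => ?_) hbdd
    have htangent := pow_add_mul_sub_le_pow hβ hx p
    rw [hslope] at htangent
    linarith
  · intro hle
    refine ⟨β, fun n _ => ?_⟩
    obtain ⟨hnonneg, hbound⟩ :=
      (mapsTo_pow_add_Icc hc (by linarith)).iterate n ⟨le_rfl, hβ.le⟩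
    rwa [abs_of_nonneg hnonneg]

theorem stmt_5 (p : ℕ) (hp : 2 ≤ p) (hpe : Even p) (c : ℝ) (hc : 0 ≤ c) :
    (∃ M : ℝ, ∀ n : ℕ, 1 ≤ n → |(fun x : ℝ => x ^ p + c)^[n] 0| ≤ M) ↔
      c ≤ ((p : ℝ) - 1) / (p : ℝ) ^ ((p : ℝ) / ((p : ℝ) - 1)) :=
  stmt_5_general p hp c hc
end

section
/- Let p ≥ 2 be an even integer, c < 0, and let a be the positive fixed point of Q_{p,c}(x) = x^p + c. Then Q_{p,c}(c) > a if and only if c < -2^{1/(p-1)}. -/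
/-!
Write `b = -c > 0`, so that `a ^ p = a + b` and `Q(c) = b ^ p - b`. Then `a < b ^ p - b` says
`a ^ p < b ^ p`, i.e. `a < b`. Dividing the fixed-point equation by `a` gives
`a ^ (p - 1) = 1 + b / a`, so `a < b` exactly when `a ^ (p - 1) > 2`; by monotonicity of
`x ↦ x ^ (p - 1)` this is equivalent to `b ^ (p - 1) > 2`, i.e. `b > 2 ^ (1 / (p - 1))`.
-/

section FixedPoint

variable {𝕜 : Type*} [CommRing 𝕜] [LinearOrder 𝕜] [IsStrictOrderedRing 𝕜] {a b : 𝕜}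

theorem lt_pow_sub_iff_lt_of_pow_eq_add {p : ℕ} (hp : p ≠ 0) (ha : 0 ≤ a) (hb : 0 ≤ b)
    (hfix : a ^ p = a + b) : a < b ^ p - b ↔ a < b := by
  rw [← pow_lt_pow_iff_left₀ ha hb hp, lt_sub_iff_add_lt, ← hfix]

theorem two_lt_pow_iff_lt_of_pow_succ_eq_add {q : ℕ} (ha : 0 < a) (hfix : a ^ (q + 1) = a + b) :
    2 < a ^ q ↔ a < b := by
  rw [← mul_lt_mul_iff_right₀ ha, ← pow_succ', hfix]
  constructor <;> intro h <;> linarith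

theorem lt_iff_two_lt_pow_of_pow_succ_eq_add {q : ℕ} (hq : q ≠ 0) (ha : 0 < a) (hb : 0 < b)
    (hfix : a ^ (q + 1) = a + b) : a < b ↔ 2 < b ^ q := by
  have key := two_lt_pow_iff_lt_of_pow_succ_eq_add ha hfix
  constructor
  · intro hab
    exact (key.mpr hab).trans (pow_lt_pow_left₀ hab ha.le hq)
  · intro h
    by_contra! hba
    have ha2 : a ^ q ≤ 2 := not_lt.mp (mt key.mp (not_lt.mpr hba))
    linarith [pow_le_pow_left₀ hb.le hba q]

end FixedPoint

theorem stmt_8 (p : ℕ) (hp : 2 ≤ p) (hpe : Even p) (c : ℝ) (hc : c < 0)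
    (a : ℝ) (ha : 0 < a) (hfix : a ^ p + c = a) :
    a < c ^ p + c ↔ c < -(2 : ℝ) ^ ((1 : ℝ) / ((p : ℝ) - 1)) := by
  obtain ⟨q, rfl⟩ : ∃ q, p = q + 1 := ⟨p - 1, by omega⟩
  have hq : q ≠ 0 := by omega
  have hb : 0 < -c := neg_pos.mpr hc
  have hfix' : a ^ (q + 1) = a + -c := by linarith
  have hexp : (1 : ℝ) / ((↑(q + 1) : ℝ) - 1) = (q : ℝ)⁻¹ := by push_cast; ring
  calc a < c ^ (q + 1) + c ↔ a < (-c) ^ (q + 1) - -c := by rw [hpe.neg_pow, sub_neg_eq_add]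
    _ ↔ a < -c := lt_pow_sub_iff_lt_of_pow_eq_add (by omega) ha.le hb.le hfix'
    _ ↔ 2 < (-c) ^ q := lt_iff_two_lt_pow_of_pow_succ_eq_add hq ha hb hfix'
    _ ↔ (2 : ℝ) ^ (q : ℝ)⁻¹ < -c := by
      rw [Real.rpow_inv_lt_iff_of_pos zero_le_two hb.le (by positivity), Real.rpow_natCast]
    _ ↔ c < -(2 : ℝ) ^ ((1 : ℝ) / ((↑(q + 1) : ℝ) - 1)) := by rw [hexp, lt_neg]
end

section
/- Let p ≥ 2 be an even integer and c < 0. The sequence {Q_{p,c}^n(0)}_{n≥1} of iterates of Q_{p,c}(x) = x^p + c starting at 0 is bounded if and only if c ≥ -2^{1/(p-1)}. -/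
theorem stmt_9 (p : ℕ) (hp : 2 ≤ p) (hpe : Even p) (c : ℝ) (hc : c < 0) :
    (∃ M : ℝ, ∀ n : ℕ, 1 ≤ n → |(fun x : ℝ => x ^ p + c)^[n] 0| ≤ M) ↔
      -(2 : ℝ) ^ ((1 : ℝ) / ((p : ℝ) - 1)) ≤ c := by
  set f : ℝ → ℝ := fun x => x ^ p + c with hf
  set a : ℝ := -c with ha
  have ha0 : 0 < a := by simp only [ha]; linarith
  have hp1 : p - 1 + 1 = p := by omega
  have hcast : ((p - 1 : ℕ) : ℝ) = (p : ℝ) - 1 := by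
    push_cast [Nat.cast_sub (by omega : 1 ≤ p)]; ring
  have hpne : (p : ℝ) - 1 ≠ 0 := by
    have : (2 : ℝ) ≤ (p : ℝ) := by exact_mod_cast hp
    linarith
  have hb : ((2 : ℝ) ^ ((1 : ℝ) / ((p : ℝ) - 1))) ^ (p - 1) = 2 := by
    rw [← Real.rpow_natCast ((2:ℝ) ^ ((1 : ℝ) / ((p : ℝ) - 1))) (p - 1),
      ← Real.rpow_mul (by norm_num), hcast]
    rw [one_div, inv_mul_cancel₀ hpne, Real.rpow_one]
  have hf1 : f^[1] 0 = c := by simp [hf, zero_pow (by omega : p ≠ 0)]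
  have hkey : (-(2 : ℝ) ^ ((1 : ℝ) / ((p : ℝ) - 1)) ≤ c) ↔ a ^ (p - 1) ≤ 2 := by
    constructor
    · intro h
      calc a ^ (p - 1) ≤ ((2 : ℝ) ^ ((1 : ℝ) / ((p : ℝ) - 1))) ^ (p - 1) :=
            pow_le_pow_left₀ ha0.le (by rw [ha]; linarith) _
        _ = 2 := hb
    · intro h
      have hble : a ≤ (2 : ℝ) ^ ((1 : ℝ) / ((p : ℝ) - 1)) := by
        apply (pow_le_pow_iff_left₀ ha0.le (by positivity) (by omega : p - 1 ≠ 0)).mp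
        rw [hb]; exact h
      rw [ha] at hble; linarith
  rw [hkey]
  constructor
  · rintro ⟨M, hM⟩
    by_contra h2
    push_neg at h2
    have ha1 : 1 < a := by
      by_contra hle
      push_neg at hle
      have : a ^ (p - 1) ≤ 1 := pow_le_one₀ ha0.le hle
      linarith
    have hap : a ^ p = a * a ^ (p - 1) := by rw [← pow_succ', hp1]
    set δ : ℝ := a ^ p - 2 * a with hδdef
    have hδ : 0 < δ := by rw [hδdef, hap]; nlinarith
    have step : ∀ x : ℝ, a ≤ x → x + δ ≤ f x := by
      intro x hax
      have hxp : x * a ^ (p - 1) ≤ x ^ p := by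
        calc x * a ^ (p - 1) ≤ x * x ^ (p - 1) :=
              mul_le_mul_of_nonneg_left (pow_le_pow_left₀ ha0.le hax _) (by linarith)
          _ = x ^ p := by rw [← pow_succ', hp1]
      have key : 0 ≤ (x - a) * (a ^ (p - 1) - 1) :=
        mul_nonneg (by linarith) (by linarith)
      simp only [hf]
      have hca : c = -a := by rw [ha]; ring
      rw [hδdef, hca, hap]
      nlinarith
    have grow : ∀ n : ℕ, a + ((n : ℝ) + 1) * δ ≤ f^[n + 2] 0 := by
      intro n
      induction n with
      | zero =>
        have h2' : f^[2] 0 = f c := by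
          rw [show (2:ℕ) = 1 + 1 from rfl, Function.iterate_succ_apply', hf1]
        rw [show (0:ℕ) + 2 = 2 from rfl, h2']
        have hcp : c ^ p = a ^ p := by rw [ha, Even.neg_pow hpe]
        simp only [hf]
        rw [hcp, hδdef]
        push_cast
        have hca : c = -a := by rw [ha]; ring
        rw [hca]; ring_nf; linarith
      | succ n ih =>
        rw [show n + 1 + 2 = (n + 2) + 1 from rfl, Function.iterate_succ_apply']
        have hx : a ≤ f^[n + 2] 0 := by
          have : (0:ℝ) ≤ ((n : ℝ) + 1) * δ := by positivity
          linarith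
        have := step _ hx
        push_cast
        linarith
    obtain ⟨n, hn⟩ := exists_nat_gt (M / δ)
    have hMn : M < (n : ℝ) * δ := (div_lt_iff₀ hδ).mp hn
    have h1 := hM (n + 2) (by omega)
    have h2' := le_abs_self (f^[n + 2] 0)
    have h3 := grow n
    have : (0:ℝ) ≤ (n:ℝ) := Nat.cast_nonneg n
    nlinarith
  · intro h2
    refine ⟨a, fun n hn => ?_⟩
    obtain ⟨m, rfl⟩ : ∃ m, n = m + 1 := ⟨n - 1, by omega⟩
    clear hn
    induction m with
    | zero => rw [hf1]; rw [ha]; rw [abs_of_nonpos hc.le]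
    | succ m ih =>
      rw [show m + 1 + 1 = (m + 1) + 1 from rfl, Function.iterate_succ_apply']
      set x := f^[m + 1] 0 with hx
      have h1 : x ^ p = |x| ^ p := (hpe.pow_abs x).symm
      have h2'' : |x| ^ p ≤ a ^ p := pow_le_pow_left₀ (abs_nonneg x) ih p
      have hap : a ^ p = a ^ (p - 1) * a := by rw [← pow_succ, hp1]
      have h3 : a ^ p ≤ 2 * a := by
        rw [hap]
        nlinarith
      have h4 : 0 ≤ x ^ p := hpe.pow_nonneg x
      have hca : c = -a := by rw [ha]; ring
      rw [abs_le]
      constructor <;> simp only [hf] <;> nlinarith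
end

section
/- Let p ≥ 2 be an even integer. The intersection of the Multibrot set M^p with the real line equals the closed interval [-2^{1/(p-1)}, (p-1)/p^{p/(p-1)}]. That is, for real c, the sequence {Q_{p,c}^n(0)}_{n≥1} with Q_{p,c}(z) = z^p + c is bounded if and only if -2^{1/(p-1)} ≤ c ≤ (p-1)/p^{p/(p-1)}. -/
/-!
Write `f x = x ^ p + c` with `p` even. The right endpoint is `max (x - x ^ p) = q - q ^ p`,
attained at `q = p ^ (-1/(p-1))`: beyond it every step raises the orbit by at least
`c - (q - q ^ p)`, so it escapes to `+∞`. The left endpoint is `-a` with `a ^ (p-1) = 2`: if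
`c < -a`, then `|x| ≥ -c` forces `|f x| ≥ ((-c) ^ (p-1) - 1) |x|` with a factor `> 1`, and the
orbit grows geometrically from `f 0 = c`. Between the endpoints `f` maps `[-q, q]` (for `c ≥ 0`)
or `[c, -c]` (for `c < 0`) into itself.
-/

open Filter Function Real Set

lemma Even.one_add_mul_le_pow {R : Type*} [CommRing R] [LinearOrder R] [IsStrictOrderedRing R]
    {n : ℕ} (hn : Even n) (a : R) : 1 + n * a ≤ (1 + a) ^ n := by
  rcases le_or_gt (-2) a with ha | ha
  · exact _root_.one_add_mul_le_pow ha n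
  rcases n.eq_zero_or_pos with rfl | hn₀
  · simp
  have hn₁ : (1 : R) ≤ n := by exact_mod_cast hn₀
  calc 1 + n * a ≤ 1 + a := by nlinarith
    _ ≤ 0 := by linarith
    _ ≤ (1 + a) ^ n := hn.pow_nonneg _

lemma add_nsmul_le_iterate {α : Type*} [AddCommMonoid α] [PartialOrder α] [IsOrderedAddMonoid α]
    {g : α → α} {d : α} (hg : ∀ x, x + d ≤ g x) (x : α) : ∀ n : ℕ, x + n • d ≤ g^[n] x
  | 0 => by simp
  | n + 1 => by
    rw [iterate_succ_apply', succ_nsmul, ← add_assoc]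
    exact (add_le_add_left (add_nsmul_le_iterate hg x n) d).trans (hg _)

lemma pow_mul_norm_le_norm_iterate {E : Type*} [SeminormedAddGroup E] {g : E → E} {b l : ℝ}
    (hl : 1 ≤ l) (hg : ∀ x, b ≤ ‖x‖ → l * ‖x‖ ≤ ‖g x‖) :
    ∀ (n : ℕ) (x : E), b ≤ ‖x‖ → l ^ n * ‖x‖ ≤ ‖g^[n] x‖
  | 0, x, _ => by simp
  | n + 1, x, hx => by
    have hgx := hg x hx
    have hx₀ : 0 ≤ ‖x‖ := norm_nonneg x
    rw [iterate_succ_apply, pow_succ, mul_assoc]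
    refine (mul_le_mul_of_nonneg_left hgx (by positivity)).trans ?_
    exact pow_mul_norm_le_norm_iterate hl hg n (g x) (hx.trans (by nlinarith))

section Multibrot

variable {p : ℕ} {c : ℝ}

lemma sub_pow_le_sub_pow_of_mul_pow_eq_one (hp : Even p) {q : ℝ} (hq₀ : 0 < q)
    (hq : p * q ^ (p - 1) = 1) (x : ℝ) : x - x ^ p ≤ q - q ^ p := by
  have hp₀ : p ≠ 0 := by rintro rfl; norm_num at hq
  have hpq : p * q ^ p = q := by
    have hsplit : q ^ p = q ^ (p - 1) * q := by rw [← pow_succ]; congr 1; omega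
    rw [hsplit, ← mul_assoc, hq, one_mul]
  -- Bernoulli at `x / q`, rescaled by `q ^ p`, is the tangent line of `x ^ p` at `q`.
  have h := hp.one_add_mul_le_pow (x / q - 1)
  rw [add_sub_cancel, div_pow, le_div_iff₀ (by positivity)] at h
  have hexpand : (1 + p * (x / q - 1)) * q ^ p = q ^ p + x - q := by
    calc (1 + p * (x / q - 1)) * q ^ p = q ^ p + p * q ^ p * (x / q) - p * q ^ p := by ring
      _ = q ^ p + x - q := by rw [hpq, mul_div_cancel₀ x hq₀.ne']
  linarith

lemma tendsto_orbit_atTop_of_sub_pow_le {c₀ : ℝ} (hc₀ : ∀ x, x - x ^ p ≤ c₀) (hc : c₀ < c) :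
    Tendsto (fun n ↦ (fun x : ℝ ↦ x ^ p + c)^[n] 0) atTop atTop := by
  have hstep (x : ℝ) : x + (c - c₀) ≤ x ^ p + c := by linarith [hc₀ x]
  refine tendsto_atTop_mono (fun n ↦ add_nsmul_le_iterate hstep 0 n) ?_
  simp only [zero_add, nsmul_eq_mul]
  exact tendsto_natCast_atTop_atTop.atTop_mul_const (sub_pos.2 hc)

lemma mul_abs_le_abs_pow_add (hp : Even p) (hp₁ : 1 ≤ p) (hc : 0 ≤ -c) {x : ℝ} (hx : -c ≤ |x|) :
    ((-c) ^ (p - 1) - 1) * |x| ≤ |x ^ p + c| := by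
  have hsplit : |x| ^ p = |x| * |x| ^ (p - 1) := by rw [← pow_succ']; congr 1; omega
  have hpow : |x| * (-c) ^ (p - 1) ≤ x ^ p := by
    rw [← hp.pow_abs, hsplit]
    exact mul_le_mul_of_nonneg_left (pow_le_pow_left₀ hc hx _) (abs_nonneg x)
  calc ((-c) ^ (p - 1) - 1) * |x| ≤ x ^ p + c := by linarith
    _ ≤ |x ^ p + c| := le_abs_self _

lemma tendsto_abs_orbit_atTop_of_two_lt (hp : Even p) (hp₁ : 1 ≤ p) (hc : c < 0)
    (h : 2 < (-c) ^ (p - 1)) :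
    Tendsto (fun n ↦ |(fun x : ℝ ↦ x ^ p + c)^[n] 0|) atTop atTop := by
  set f := fun x : ℝ ↦ x ^ p + c
  have hl : 1 < (-c) ^ (p - 1) - 1 := by linarith
  have hf0 : f 0 = c := by simp [f, zero_pow (by omega : p ≠ 0)]
  have hgrow (n : ℕ) : ((-c) ^ (p - 1) - 1) ^ n * -c ≤ |f^[n + 1] 0| := by
    have := pow_mul_norm_le_norm_iterate hl.le (b := -c) (g := f)
      (fun x hx ↦ mul_abs_le_abs_pow_add hp hp₁ (neg_nonneg.2 hc.le) hx) n c
      (by simp [abs_of_neg hc])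
    simpa [iterate_succ_apply, hf0, abs_of_neg hc] using this
  refine (tendsto_add_atTop_iff_nat 1).1 (tendsto_atTop_mono hgrow ?_)
  exact (tendsto_pow_atTop_atTop_of_one_lt hl).atTop_mul_const (by linarith)

lemma abs_orbit_le (hp : Even p) {β : ℝ} (hβ : 0 ≤ β) (hcβ : -β ≤ c) (hβc : β ^ p + c ≤ β)
    (n : ℕ) : |(fun x : ℝ ↦ x ^ p + c)^[n] 0| ≤ β := by
  have hmaps : MapsTo (fun x : ℝ ↦ x ^ p + c) {x | |x| ≤ β} {x | |x| ≤ β} := fun x hx ↦ by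
    have hx₀ := hp.pow_nonneg x
    have hxβ : x ^ p ≤ β ^ p := by
      rw [← hp.pow_abs]; exact pow_le_pow_left₀ (abs_nonneg x) hx p
    show |x ^ p + c| ≤ β
    exact abs_le.2 ⟨by linarith, by linarith⟩
  exact hmaps.iterate n (by simpa using hβ)

theorem orbit_bounded_iff_of_pow_eq (hp : 2 ≤ p) (hpe : Even p) {a q : ℝ} (ha₀ : 0 < a)
    (ha : a ^ (p - 1) = 2) (hq₀ : 0 < q) (hq : p * q ^ (p - 1) = 1) :
    (∃ M : ℝ, ∀ n : ℕ, 1 ≤ n → |(fun x : ℝ ↦ x ^ p + c)^[n] 0| ≤ M) ↔ -a ≤ c ∧ c ≤ q - q ^ p := by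
  constructor
  · rintro ⟨M, hM⟩
    have hunbdd : ¬Tendsto (fun n ↦ |(fun x : ℝ ↦ x ^ p + c)^[n] 0|) atTop atTop := fun h ↦
      let ⟨n, hMn, hn⟩ := ((h.eventually_gt_atTop M).and (eventually_ge_atTop 1)).exists
      (hM n hn).not_gt hMn
    constructor
    · by_contra! h
      refine hunbdd (tendsto_abs_orbit_atTop_of_two_lt hpe (by omega) (by linarith) ?_)
      rw [← ha]
      exact pow_lt_pow_left₀ (by linarith) ha₀.le (by omega)
    · by_contra! h
      exact hunbdd (tendsto_abs_atTop_atTop.comp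
        (tendsto_orbit_atTop_of_sub_pow_le (sub_pow_le_sub_pow_of_mul_pow_eq_one hpe hq₀ hq) h))
  · rintro ⟨hac, hcq⟩
    rcases le_or_gt 0 c with hc | hc
    · exact ⟨q, fun n _ ↦ abs_orbit_le hpe hq₀.le (by linarith) (by linarith) n⟩
    · refine ⟨-c, fun n _ ↦ abs_orbit_le hpe (by linarith) (neg_neg c).le ?_ n⟩
      have hc2 : (-c) ^ (p - 1) ≤ 2 := by
        rw [← ha]; exact pow_le_pow_left₀ (by linarith) (by linarith) _
      have hsplit : (-c) ^ p = (-c) ^ (p - 1) * -c := by rw [← pow_succ]; congr 1; omega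
      nlinarith

end Multibrot

theorem stmt_10 (p : ℕ) (hp : 2 ≤ p) (hpe : Even p) (c : ℝ) :
    (∃ M : ℝ, ∀ n : ℕ, 1 ≤ n → |(fun x : ℝ => x ^ p + c)^[n] 0| ≤ M) ↔
      -(2 : ℝ) ^ ((1 : ℝ) / ((p : ℝ) - 1)) ≤ c ∧
        c ≤ ((p : ℝ) - 1) / (p : ℝ) ^ ((p : ℝ) / ((p : ℝ) - 1)) := by
  have hp₁ : (p : ℝ) - 1 = ((p - 1 : ℕ) : ℝ) := by rw [Nat.cast_sub (by omega), Nat.cast_one]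
  have hroot (x : ℝ) (hx : 0 ≤ x) : (x ^ (1 / ((p : ℝ) - 1))) ^ (p - 1) = x := by
    rw [hp₁, one_div, rpow_inv_natCast_pow hx (by omega)]
  set t := (p : ℝ) ^ (1 / ((p : ℝ) - 1))
  have ht₀ : 0 < t := by positivity
  have ht : t ^ (p - 1) = p := hroot p (Nat.cast_nonneg p)
  have hright : ((p : ℝ) - 1) / (p : ℝ) ^ ((p : ℝ) / ((p : ℝ) - 1)) = t⁻¹ - t⁻¹ ^ p := by
    have hpt : (p : ℝ) ^ ((p : ℝ) / ((p : ℝ) - 1)) = p * t := by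
      have hexp : (p : ℝ) / ((p : ℝ) - 1) = 1 + 1 / ((p : ℝ) - 1) := by
        have : (p : ℝ) - 1 ≠ 0 := by rw [hp₁]; exact_mod_cast (by omega : p - 1 ≠ 0)
        field_simp; ring
      rw [hexp, rpow_add (by positivity), rpow_one]
    have htp : t ^ p = p * t := by rw [← ht, ← pow_succ]; congr 1; omega
    rw [hpt, inv_pow, htp]
    field_simp
  rw [hright]
  exact orbit_bounded_iff_of_pow_eq hp hpe (by positivity) (hroot 2 zero_le_two) (inv_pos.2 ht₀)
    (by rw [inv_pow, ht]; field_simp)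
end

section
/- Let p ≥ 2 be an even integer. For real numbers x, y, both real orbits {Q_{p,x-y}^n(0)} and {Q_{p,x+y}^n(0)} are bounded if and only if |x - t_p| + |y| ≤ l_p/2, where t_p = (-p[(2p)^{1/(p-1)} - 1] - 1)/(2 p^{p/(p-1)}) and l_p = (p[(2p)^{1/(p-1)} + 1] - 1)/p^{p/(p-1)}. -/
/-!
The real slice of the Multibrot set of even degree `p` is the interval
`[-2^(1/(p-1)), (p-1)/p^(p/(p-1))]`. Above the right endpoint `c` exceeds the maximum of
`z - z^p` (attained where the tangent to `z^p` has slope one, a Bernoulli estimate), so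
`Q(z) - z` is bounded below by a positive constant and the orbit drifts to `+∞`. Below the left
endpoint, `r = -c` satisfies `r^(p-1) > 2`, the second iterate lies beyond `r`, and on `[r, ∞)`
the map again moves points right by a fixed amount. Inside the interval a symmetric interval
`[-r, r]` is forward invariant: `r = -c` for `c ≤ 0`, the tangency point for `c > 0`.
Finally, a point `c = x + yj` gives the two real parameters `x ∓ y`, and both lie in an interval
`[a, b]` exactly when `(x, y)` lies in the square `|x - (a+b)/2| + |y| ≤ (b-a)/2`.
-/

open Real Set Function

def OrbitBounded (f : ℝ → ℝ) : Prop :=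
  ∃ M : ℝ, ∀ n : ℕ, 1 ≤ n → |f^[n] 0| ≤ M

noncomputable def multibrotMin (p : ℕ) : ℝ := -2 ^ ((1 : ℝ) / ((p : ℝ) - 1))

noncomputable def multibrotMax (p : ℕ) : ℝ := ((p : ℝ) - 1) / (p : ℝ) ^ ((p : ℝ) / ((p : ℝ) - 1))

theorem mem_Icc_sub_and_add_iff {a b x y : ℝ} :
    (x - y ∈ Icc a b ∧ x + y ∈ Icc a b) ↔ |x - (a + b) / 2| + |y| ≤ (b - a) / 2 := by
  simp only [mem_Icc]
  constructor
  · rintro ⟨⟨h₁, h₂⟩, h₃, h₄⟩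
    rcases abs_cases (x - (a + b) / 2) with ⟨hx, -⟩ | ⟨hx, -⟩ <;>
      rcases abs_cases y with ⟨hy, -⟩ | ⟨hy, -⟩ <;> linarith
  · intro h
    refine ⟨⟨?_, ?_⟩, ?_, ?_⟩ <;>
      linarith [le_abs_self (x - (a + b) / 2), neg_abs_le (x - (a + b) / 2), le_abs_self y,
        neg_abs_le y]

section Drift

variable {f : ℝ → ℝ} {a d : ℝ}

theorem add_mul_le_iterate (hd : 0 ≤ d) (hf : ∀ z, a ≤ z → z + d ≤ f z) {x : ℝ} (hx : a ≤ x)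
    (n : ℕ) : x + n * d ≤ f^[n] x := by
  induction n with
  | zero => simp
  | succ n ih =>
    have hn : a ≤ f^[n] x := by linarith [mul_nonneg n.cast_nonneg hd]
    rw [iterate_succ_apply', Nat.cast_succ]
    linarith [hf _ hn]

theorem not_orbitBounded_of_le_add (hd : 0 < d) (hf : ∀ z, a ≤ z → z + d ≤ f z) {k : ℕ}
    (hk : a ≤ f^[k] 0) : ¬OrbitBounded f := by
  rintro ⟨M, hM⟩
  obtain ⟨n, hn⟩ := exists_nat_gt ((M - f^[k] 0) / d)
  rw [div_lt_iff₀ hd] at hn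
  have h_far := add_mul_le_iterate hd.le hf hk (n + 1)
  rw [← iterate_add_apply] at h_far
  have h_bdd := (le_abs_self _).trans (hM (n + 1 + k) (by omega))
  push_cast at h_far
  linarith

end Drift

theorem orbitBounded_pow_add {p : ℕ} (hpe : Even p) {c r : ℝ} (hc : -r ≤ c)
    (hr : r ^ p + c ≤ r) : OrbitBounded (fun z => z ^ p + c) := by
  have hmaps : MapsTo (fun z : ℝ => z ^ p + c) (Icc (-r) r) (Icc (-r) r) := by
    intro z hz
    have : z ^ p ≤ r ^ p := by
      rw [← hpe.pow_abs]
      exact pow_le_pow_left₀ (abs_nonneg z) (abs_le.2 hz) p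
    exact ⟨by linarith [hpe.pow_nonneg z], by linarith⟩
  have hr0 : (0 : ℝ) ∈ Icc (-r) r := by
    constructor <;> linarith [hpe.pow_nonneg r]
  exact ⟨r, fun n _ => abs_le.2 (hmaps.iterate n hr0)⟩

theorem sub_pow_le_of_natCast_mul_pow_eq_one {p : ℕ} (hpe : Even p) {β : ℝ} (hβ : 0 ≤ β)
    (h : p * β ^ (p - 1) = 1) (z : ℝ) : z - z ^ p ≤ β - β ^ p := by
  have tangent :=
    pow_add_mul_le_add_pow hβ (by linarith [abs_nonneg z] : 0 ≤ 2 * β + (|z| - β)) p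
  rw [h, one_mul, add_sub_cancel, hpe.pow_abs] at tangent
  linarith [le_abs_self z]

section Endpoints

variable {p : ℕ}

theorem one_div_natCast_sub_one (hp : 1 ≤ p) : (1 : ℝ) / ((p : ℝ) - 1) = ((p - 1 : ℕ) : ℝ)⁻¹ := by
  rw [Nat.cast_sub hp, Nat.cast_one, one_div]

theorem natCast_rpow_div_sub_one (hp : 2 ≤ p) :
    (p : ℝ) ^ ((p : ℝ) / ((p : ℝ) - 1)) = p * (p : ℝ) ^ ((1 : ℝ) / ((p : ℝ) - 1)) := by
  have hp' : (2 : ℝ) ≤ p := by exact_mod_cast hp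
  have : (p : ℝ) / ((p : ℝ) - 1) = 1 + 1 / ((p : ℝ) - 1) := by
    field_simp [show (p : ℝ) - 1 ≠ 0 by linarith]
    ring
  rw [this, rpow_add (by linarith), rpow_one]

theorem multibrotMin_le_neg_iff (hp : 2 ≤ p) {r : ℝ} (hr : 0 ≤ r) :
    multibrotMin p ≤ -r ↔ r ^ (p - 1) ≤ 2 := by
  have : (0 : ℝ) < (p - 1 : ℕ) := by exact_mod_cast (by omega : 0 < p - 1)
  rw [multibrotMin, neg_le_neg_iff, one_div_natCast_sub_one (by omega),
    le_rpow_inv_iff_of_pos hr zero_le_two this, rpow_natCast]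

theorem exists_sub_pow_eq_multibrotMax (hp : 2 ≤ p) :
    ∃ β : ℝ, 0 ≤ β ∧ p * β ^ (p - 1) = 1 ∧ β - β ^ p = multibrotMax p := by
  have hp0 : (0 : ℝ) < p := by positivity
  set β : ℝ := (p : ℝ)⁻¹ ^ ((p - 1 : ℕ) : ℝ)⁻¹
  have hβ : β ^ (p - 1) = (p : ℝ)⁻¹ := rpow_inv_natCast_pow (by positivity) (by omega)
  refine ⟨β, by positivity, by rw [hβ, mul_inv_cancel₀ hp0.ne'], ?_⟩
  have hβp : β ^ p = (p : ℝ)⁻¹ * β := by rw [← hβ, pow_sub_one_mul (by omega)]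
  have hβ' : β = ((p : ℝ) ^ ((1 : ℝ) / ((p : ℝ) - 1)))⁻¹ := by
    rw [one_div_natCast_sub_one (by omega)]
    exact inv_rpow hp0.le _
  rw [hβp, multibrotMax, natCast_rpow_div_sub_one hp, hβ']
  field_simp

theorem sub_pow_le_multibrotMax (hp : 2 ≤ p) (hpe : Even p) (z : ℝ) :
    z - z ^ p ≤ multibrotMax p := by
  obtain ⟨β, hβ, hβp, hβmax⟩ := exists_sub_pow_eq_multibrotMax hp
  exact hβmax ▸ sub_pow_le_of_natCast_mul_pow_eq_one hpe hβ hβp z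

end Endpoints

section Orbit

variable {p : ℕ}

theorem not_orbitBounded_of_multibrotMax_lt (hp : 2 ≤ p) (hpe : Even p) {c : ℝ}
    (hc : multibrotMax p < c) : ¬OrbitBounded (fun z => z ^ p + c) :=
  not_orbitBounded_of_le_add (a := 0) (k := 0) (sub_pos.2 hc)
    (fun z _ => by linarith [sub_pow_le_multibrotMax hp hpe z]) le_rfl

theorem not_orbitBounded_of_lt_multibrotMin (hp : 2 ≤ p) (hpe : Even p) {c : ℝ}
    (hc : c < multibrotMin p) : ¬OrbitBounded (fun z => z ^ p + c) := by
  obtain ⟨r, rfl⟩ : ∃ r, c = -r := ⟨-c, (neg_neg c).symm⟩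
  have hr : 0 < r := by
    have : multibrotMin p < 0 := neg_neg_of_pos (rpow_pos_of_pos two_pos _)
    linarith
  have h2 : 2 < r ^ (p - 1) :=
    not_le.1 fun h => hc.not_ge ((multibrotMin_le_neg_iff hp hr.le).2 h)
  refine not_orbitBounded_of_le_add (a := r) (d := r * (r ^ (p - 1) - 2)) (k := 2)
    (mul_pos hr (by linarith)) (fun z hz => ?_) ?_
  · have hpow : r ^ (p - 1) ≤ z ^ (p - 1) := pow_le_pow_left₀ hr.le hz _
    have hzp : z ^ (p - 1) * z = z ^ p := pow_sub_one_mul (by omega) z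
    nlinarith [mul_le_mul_of_nonneg_right hpow (hr.le.trans hz),
      mul_nonneg (by linarith : (0 : ℝ) ≤ r ^ (p - 1) - 1) (sub_nonneg.2 hz)]
  · change r ≤ (0 ^ p + -r) ^ p + -r
    rw [zero_pow (by omega), zero_add, hpe.neg_pow, ← pow_sub_one_mul (by omega)]
    nlinarith

theorem orbitBounded_iff_mem_Icc (hp : 2 ≤ p) (hpe : Even p) (c : ℝ) :
    OrbitBounded (fun z => z ^ p + c) ↔ c ∈ Icc (multibrotMin p) (multibrotMax p) := by
  refine ⟨fun hc => ⟨?_, ?_⟩, fun ⟨hmin, hmax⟩ => ?_⟩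
  · by_contra! h
    exact not_orbitBounded_of_lt_multibrotMin hp hpe h hc
  · by_contra! h
    exact not_orbitBounded_of_multibrotMax_lt hp hpe h hc
  rcases le_or_gt c 0 with hc | hc
  · have h2 : (-c) ^ (p - 1) ≤ 2 :=
      (multibrotMin_le_neg_iff hp (neg_nonneg.2 hc)).1 (by rwa [neg_neg])
    refine orbitBounded_pow_add hpe (r := -c) (neg_neg c).le ?_
    rw [← pow_sub_one_mul (by omega)]
    nlinarith
  · obtain ⟨β, hβ, -, hβmax⟩ := exists_sub_pow_eq_multibrotMax hp
    exact orbitBounded_pow_add hpe (r := β) (by linarith) (by linarith)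

end Orbit

section Formulas

variable {p : ℕ}

theorem multibrotMin_add_multibrotMax_div_two (hp : 2 ≤ p) :
    (multibrotMin p + multibrotMax p) / 2 =
      (-(p : ℝ) * ((2 * (p : ℝ)) ^ ((1 : ℝ) / ((p : ℝ) - 1)) - 1) - 1) /
        (2 * (p : ℝ) ^ ((p : ℝ) / ((p : ℝ) - 1))) := by
  have hp0 : (0 : ℝ) < p := by positivity
  rw [mul_rpow zero_le_two hp0.le, natCast_rpow_div_sub_one hp, multibrotMin, multibrotMax,
    natCast_rpow_div_sub_one hp]
  field_simp
  ring

theorem multibrotMax_sub_multibrotMin (hp : 2 ≤ p) :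
    multibrotMax p - multibrotMin p =
      ((p : ℝ) * ((2 * (p : ℝ)) ^ ((1 : ℝ) / ((p : ℝ) - 1)) + 1) - 1) /
        (p : ℝ) ^ ((p : ℝ) / ((p : ℝ) - 1)) := by
  have hp0 : (0 : ℝ) < p := by positivity
  rw [mul_rpow zero_le_two hp0.le, natCast_rpow_div_sub_one hp, multibrotMin, multibrotMax,
    natCast_rpow_div_sub_one hp]
  field_simp
  ring

end Formulas

theorem stmt_11 (p : ℕ) (hp : 2 ≤ p) (hpe : Even p) (x y : ℝ) :
    ((∃ M : ℝ, ∀ n : ℕ, 1 ≤ n → |(fun z : ℝ => z ^ p + (x - y))^[n] 0| ≤ M) ∧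
     (∃ M : ℝ, ∀ n : ℕ, 1 ≤ n → |(fun z : ℝ => z ^ p + (x + y))^[n] 0| ≤ M)) ↔
      |x - (-(p : ℝ) * ((2 * (p : ℝ)) ^ ((1 : ℝ) / ((p : ℝ) - 1)) - 1) - 1) /
            (2 * (p : ℝ) ^ ((p : ℝ) / ((p : ℝ) - 1)))| + |y| ≤
        ((p : ℝ) * ((2 * (p : ℝ)) ^ ((1 : ℝ) / ((p : ℝ) - 1)) + 1) - 1) /
            (p : ℝ) ^ ((p : ℝ) / ((p : ℝ) - 1)) / 2 := by
  rw [← multibrotMin_add_multibrotMax_div_two hp, ← multibrotMax_sub_multibrotMin hp,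
    ← mem_Icc_sub_and_add_iff]
  exact and_congr (orbitBounded_iff_mem_Icc hp hpe _) (orbitBounded_iff_mem_Icc hp hpe _)
end

section
/- Let H := {(x,y) ∈ ℝ² : |x| + |y| ≤ 1} and, for each even integer p ≥ 2, let H^p := {(x,y) ∈ ℝ² : |x - t_p| + |y| ≤ l_p/2} with t_p, l_p as in the Hyperbrot characterization. Then the Hausdorff distance h(H, H^{2n}) tends to 0 as n → ∞. -/
/-!
`H^p` is the image of `H` under the homothety `v ↦ (l_p / 2) • v + (t_p, 0)`. As `H` lies in the
unit ball, this map moves every point of `H` by at most `|1 - l_p / 2| + |t_p|`, which therefore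
bounds `h(H, H^p)`. Writing `p ^ (p / (p - 1)) = p · p ^ (1 / (p - 1))` and using
`(c p) ^ (1 / (p - 1)) → 1`, one gets `t_p → 0` and `l_p → 2`.
-/

open Metric Filter Topology

lemma EuclideanSpace.norm_le_abs_add_abs (v : EuclideanSpace ℝ (Fin 2)) :
    ‖v‖ ≤ |v 0| + |v 1| := by
  rw [EuclideanSpace.norm_eq, Fin.sum_univ_two, Real.norm_eq_abs, Real.norm_eq_abs]
  refine Real.sqrt_le_iff.mpr ⟨by positivity, ?_⟩
  nlinarith [abs_nonneg (v 0), abs_nonneg (v 1)]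

lemma hausdorffDist_image_smul_add_le {E : Type*} [NormedAddCommGroup E] [NormedSpace ℝ E]
    {s : Set E} {R : ℝ} (hR : 0 ≤ R) (hs : ∀ a ∈ s, ‖a‖ ≤ R) (r : ℝ) (v : E) :
    hausdorffDist s ((fun a => r • a + v) '' s) ≤ |1 - r| * R + ‖v‖ := by
  have hmove : ∀ a ∈ s, dist a (r • a + v) ≤ |1 - r| * R + ‖v‖ := fun a ha =>
    calc dist a (r • a + v) = ‖(1 - r) • a - v‖ := by
          rw [dist_eq_norm, sub_smul, one_smul, sub_add_eq_sub_sub]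
      _ ≤ |1 - r| * ‖a‖ + ‖v‖ := by
          rw [← Real.norm_eq_abs, ← norm_smul]; exact norm_sub_le _ _
      _ ≤ |1 - r| * R + ‖v‖ := by gcongr; exact hs a ha
  refine hausdorffDist_le_of_mem_dist (by positivity)
    (fun a ha => ⟨_, ⟨a, ha, rfl⟩, hmove a ha⟩) ?_
  rintro _ ⟨a, ha, rfl⟩
  exact ⟨a, ha, dist_comm a _ ▸ hmove a ha⟩

lemma diamond_eq_image (t : ℝ) {r : ℝ} (hr : 0 < r) :
    {v : EuclideanSpace ℝ (Fin 2) | |v 0 - t| + |v 1| ≤ r} =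
      (fun a => r • a + t • EuclideanSpace.single 0 1) '' {v | |v 0| + |v 1| ≤ 1} := by
  ext x
  constructor
  · intro hx
    refine ⟨r⁻¹ • (x - t • EuclideanSpace.single 0 1), ?_, by simp [smul_smul, hr.ne']⟩
    simpa [abs_mul, abs_of_pos hr, ← mul_add, inv_mul_le_one₀ hr] using hx
  · rintro ⟨a, ha, rfl⟩
    simpa [abs_mul, abs_of_pos hr, ← mul_add] using mul_le_of_le_one_right hr.le ha

lemma hausdorffDist_diamond_le (t : ℝ) {r : ℝ} (hr : 0 < r) :
    hausdorffDist {v : EuclideanSpace ℝ (Fin 2) | |v 0| + |v 1| ≤ 1}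
      {v | |v 0 - t| + |v 1| ≤ r} ≤ |1 - r| + |t| := by
  rw [diamond_eq_image t hr]
  have h := hausdorffDist_image_smul_add_le
    (s := {v : EuclideanSpace ℝ (Fin 2) | |v 0| + |v 1| ≤ 1}) zero_le_one
    (fun a ha => (EuclideanSpace.norm_le_abs_add_abs a).trans ha) r
    (t • EuclideanSpace.single (0 : Fin 2) (1 : ℝ))
  simpa [norm_smul] using h

lemma tendsto_mul_rpow_one_div_sub_one {c : ℝ} (hc : 0 < c) :
    Tendsto (fun p : ℝ => (c * p) ^ ((1 : ℝ) / (p - 1))) atTop (𝓝 1) := by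
  have hexp : Tendsto (fun p : ℝ => (1 : ℝ) / (p - 1)) atTop (𝓝 0) :=
    tendsto_const_nhds.div_atTop (tendsto_atTop_add_const_right _ (-1) tendsto_id)
  have hc' : Tendsto (fun p : ℝ => c ^ ((1 : ℝ) / (p - 1))) atTop (𝓝 1) := by
    simpa using tendsto_const_nhds.rpow hexp (Or.inl hc.ne')
  have hp : Tendsto (fun p : ℝ => p ^ ((1 : ℝ) / (p - 1))) atTop (𝓝 1) := by
    simpa [sub_eq_add_neg] using tendsto_rpow_div_mul_add 1 1 (-1) one_ne_zero.symm
  refine (one_mul (1 : ℝ) ▸ hc'.mul hp).congr' ?_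
  filter_upwards [eventually_ge_atTop 0] with p hp₀
  rw [Real.mul_rpow hc.le hp₀]

lemma rpow_div_sub_one_self {p : ℝ} (hp : 1 < p) :
    p ^ (p / (p - 1)) = p * p ^ ((1 : ℝ) / (p - 1)) := by
  have : p / (p - 1) = 1 + 1 / (p - 1) := by field_simp [(sub_pos.2 hp).ne']; ring
  rw [this, Real.rpow_add (by linarith), Real.rpow_one]

noncomputable def hyperbrotT (p : ℝ) : ℝ :=
  (-p * ((2 * p) ^ ((1 : ℝ) / (p - 1)) - 1) - 1) / (2 * p ^ (p / (p - 1)))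

noncomputable def hyperbrotL (p : ℝ) : ℝ :=
  (p * ((2 * p) ^ ((1 : ℝ) / (p - 1)) + 1) - 1) / p ^ (p / (p - 1))

lemma tendsto_hyperbrotT : Tendsto hyperbrotT atTop (𝓝 0) := by
  have h : Tendsto (fun p : ℝ => (1 - (2 * p) ^ ((1 : ℝ) / (p - 1)) - p⁻¹) /
      (2 * (1 * p) ^ ((1 : ℝ) / (p - 1)))) atTop (𝓝 ((1 - 1 - 0) / (2 * 1))) :=
    ((tendsto_const_nhds.sub (tendsto_mul_rpow_one_div_sub_one two_pos)).sub
      tendsto_inv_atTop_zero).div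
      (tendsto_const_nhds.mul (tendsto_mul_rpow_one_div_sub_one one_pos)) (by norm_num)
  rw [show ((1 : ℝ) - 1 - 0) / (2 * 1) = 0 by norm_num] at h
  refine h.congr' ?_
  filter_upwards [eventually_gt_atTop 1] with p hp
  have : 0 < p ^ ((1 : ℝ) / (p - 1)) := Real.rpow_pos_of_pos (by linarith) _
  rw [hyperbrotT, rpow_div_sub_one_self hp, one_mul]
  field_simp
  ring

lemma tendsto_hyperbrotL : Tendsto hyperbrotL atTop (𝓝 2) := by
  have h : Tendsto (fun p : ℝ => ((2 * p) ^ ((1 : ℝ) / (p - 1)) + 1 - p⁻¹) /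
      (1 * p) ^ ((1 : ℝ) / (p - 1))) atTop (𝓝 ((1 + 1 - 0) / 1)) :=
    (((tendsto_mul_rpow_one_div_sub_one two_pos).add tendsto_const_nhds).sub
      tendsto_inv_atTop_zero).div (tendsto_mul_rpow_one_div_sub_one one_pos) one_ne_zero
  rw [show ((1 : ℝ) + 1 - 0) / 1 = 2 by norm_num] at h
  refine h.congr' ?_
  filter_upwards [eventually_gt_atTop 1] with p hp
  have : 0 < p ^ ((1 : ℝ) / (p - 1)) := Real.rpow_pos_of_pos (by linarith) _
  rw [hyperbrotL, rpow_div_sub_one_self hp, one_mul]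
  field_simp

theorem stmt_14 :
    Filter.Tendsto
      (fun n : ℕ =>
        Metric.hausdorffDist
          {v : EuclideanSpace ℝ (Fin 2) | |v 0| + |v 1| ≤ 1}
          {v : EuclideanSpace ℝ (Fin 2) |
            |v 0 - (-((2 * n : ℕ) : ℝ) *
                  ((2 * ((2 * n : ℕ) : ℝ)) ^ ((1 : ℝ) / (((2 * n : ℕ) : ℝ) - 1)) - 1) - 1) /
                (2 * ((2 * n : ℕ) : ℝ) ^ (((2 * n : ℕ) : ℝ) / (((2 * n : ℕ) : ℝ) - 1)))| +
              |v 1| ≤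
              (((2 * n : ℕ) : ℝ) *
                    ((2 * ((2 * n : ℕ) : ℝ)) ^ ((1 : ℝ) / (((2 * n : ℕ) : ℝ) - 1)) + 1) - 1) /
                  ((2 * n : ℕ) : ℝ) ^ (((2 * n : ℕ) : ℝ) / (((2 * n : ℕ) : ℝ) - 1)) / 2})
      Filter.atTop (nhds 0) := by
  have hp : Tendsto (fun n : ℕ => ((2 * n : ℕ) : ℝ)) atTop atTop :=
    tendsto_natCast_atTop_atTop.comp (tendsto_id.const_mul_atTop' two_pos)
  have hT := tendsto_hyperbrotT.comp hp
  have hL := (tendsto_hyperbrotL.comp hp).div_const 2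
  rw [div_self two_ne_zero] at hL
  have hbound : Tendsto
      (fun n : ℕ => |1 - hyperbrotL (2 * n : ℕ) / 2| + |hyperbrotT (2 * n : ℕ)|) atTop (𝓝 0) := by
    simpa using ((tendsto_const_nhds (x := (1 : ℝ))).sub hL).abs.add hT.abs
  refine squeeze_zero' (Eventually.of_forall fun n => hausdorffDist_nonneg) ?_ hbound
  filter_upwards [hL.eventually (eventually_gt_nhds one_pos)] with n hn
  exact hausdorffDist_diamond_le _ hn
end

section
/- Let p ≥ 2 be an even integer and c ∈ ℝ with 0 ≤ c ≤ (p-1)/p^{p/(p-1)}. Then Q_{p,c}(x) = x^p + c has a fixed point a with 0 ≤ a, and the orbit Q_{p,c}^n(0) is contained in [0, a] for all n ≥ 1. -/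
open Set

theorem MonotoneOn.iterate_mem_Icc {α : Type*} [Preorder α] {f : α → α} {a b : α}
    (hf : MonotoneOn f (Icc a b)) (ha : a ≤ f a) (hb : f b ≤ b) (hab : a ≤ b) (n : ℕ) :
    f^[n] a ∈ Icc a b :=
  have hmaps : MapsTo f (Icc a b) (Icc a b) :=
    hf.mapsTo_Icc.mono_right (Icc_subset_Icc ha hb)
  hmaps.iterate n (left_mem_Icc.mpr hab)

/-- The value of `x - x ^ p` at its maximiser `x = p ^ (-1 / (p - 1))` on `[0, ∞)`. -/
theorem exists_pos_sub_pow_eq {p : ℕ} (hp : 1 < p) :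
    ∃ x : ℝ, 0 < x ∧ x - x ^ p = ((p : ℝ) - 1) / (p : ℝ) ^ ((p : ℝ) / ((p : ℝ) - 1)) := by
  have hp0 : (0 : ℝ) < p := by positivity
  have hp1 : (0 : ℝ) < p - 1 := by
    have : (1 : ℝ) < p := by exact_mod_cast hp
    linarith
  set t : ℝ := (p : ℝ) ^ (1 / ((p : ℝ) - 1))
  have ht : 0 < t := Real.rpow_pos_of_pos hp0 _
  -- `t ^ (p - 1) = p`, so `1 / t` is the critical point and `x - x ^ p = (p - 1) / (p * t)` there.
  have htp : t ^ p = p * t := by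
    rw [← Real.rpow_natCast, ← Real.rpow_mul hp0.le, ← Real.rpow_one_add' hp0.le (by positivity)]
    congr 1
    field_simp
    ring
  have hpow : (p : ℝ) ^ ((p : ℝ) / ((p : ℝ) - 1)) = p * t := by
    rw [← htp, ← Real.rpow_natCast, ← Real.rpow_mul hp0.le]
    congr 1
    field_simp
  refine ⟨1 / t, by positivity, ?_⟩
  rw [hpow, div_pow, one_pow, htp]
  field_simp

theorem exists_nonneg_pow_add_eq_self {p : ℕ} (hp : 1 < p) {c : ℝ} (hc0 : 0 ≤ c)
    (hc : c ≤ ((p : ℝ) - 1) / (p : ℝ) ^ ((p : ℝ) / ((p : ℝ) - 1))) :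
    ∃ a : ℝ, 0 ≤ a ∧ a ^ p + c = a := by
  obtain ⟨x, hx, hxmax⟩ := exists_pos_sub_pow_eq hp
  have hcont : ContinuousOn (fun y : ℝ => y ^ p + c - y) (Icc 0 x) := by fun_prop
  have hzero : (0 : ℝ) ∈ Icc (x ^ p + c - x) ((0 : ℝ) ^ p + c - 0) := by
    rw [zero_pow (by omega)]
    constructor <;> linarith
  obtain ⟨a, ha, hfix⟩ := intermediate_value_Icc' hx.le hcont hzero
  exact ⟨a, ha.1, sub_eq_zero.mp hfix⟩

theorem stmt_18_general (p : ℕ) (hp : 2 ≤ p) (c : ℝ) (hc0 : 0 ≤ c)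
    (hc : c ≤ ((p : ℝ) - 1) / (p : ℝ) ^ ((p : ℝ) / ((p : ℝ) - 1))) :
    ∃ a : ℝ, 0 ≤ a ∧ a ^ p + c = a ∧
      ∀ n : ℕ, 1 ≤ n → (fun x : ℝ => x ^ p + c)^[n] 0 ∈ Set.Icc 0 a := by
  obtain ⟨a, ha, hfix⟩ := exists_nonneg_pow_add_eq_self hp hc0 hc
  refine ⟨a, ha, hfix, fun n _ => ?_⟩
  have hmono : MonotoneOn (fun x : ℝ => x ^ p + c) (Icc 0 a) :=
    fun x hx y _ hxy => add_le_add_left (pow_le_pow_left₀ hx.1 hxy p) c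
  exact hmono.iterate_mem_Icc (by positivity) hfix.le ha n

theorem stmt_18 (p : ℕ) (hp : 2 ≤ p) (hpe : Even p) (c : ℝ) (hc0 : 0 ≤ c)
    (hc : c ≤ ((p : ℝ) - 1) / (p : ℝ) ^ ((p : ℝ) / ((p : ℝ) - 1))) :
    ∃ a : ℝ, 0 ≤ a ∧ a ^ p + c = a ∧
      ∀ n : ℕ, 1 ≤ n → (fun x : ℝ => x ^ p + c)^[n] 0 ∈ Set.Icc 0 a :=
  stmt_18_general p hp c hc0 hc
end
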